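/- Every graph G with sim-width at most w and no induced subgraph isomorphic to K_t ⊠ K_t or K_t ⊠ S_t has mim-width at most R(R(w+1, t), R(t, t)), where R denotes the Ramsey number. -/

import Mathlib

open SimpleGraph
open scoped Classical

noncomputable section

/-- The graph `K_t ⊠ S_t`: a clique of size `t` (the `inl` part), an independent set of
size `t` (the `inr` part), joined by a perfect matching. -/
def ktst (t : ℕ) : SimpleGraph (Fin t ⊕ Fin t) :=
  SimpleGraph.fromRel (fun x y =>
    match x, y with
    | Sum.inl i, Sum.inl j => i ≠ j
    | Sum.inl i, Sum.inr j => i = j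
    | _, _ => False)

/-- The graph `K_t ⊠ K_t`: two cliques of size `t` joined by a perfect matching. -/
def ktkt (t : ℕ) : SimpleGraph (Fin t ⊕ Fin t) :=
  SimpleGraph.fromRel (fun x y =>
    match x, y with
    | Sum.inl i, Sum.inl j => i ≠ j
    | Sum.inr i, Sum.inr j => i ≠ j
    | Sum.inl i, Sum.inr j => i = j
    | _, _ => False)

/-- The cycle graph on `ZMod n`. -/
def cycleG (n : ℕ) : SimpleGraph (ZMod n) :=
  SimpleGraph.fromRel (fun x y => y = x + 1)

/-- `σ` enumerates the vertices of `G` as a co-comparability ordering. -/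
def IsCoCompOrdering {V : Type} {n : ℕ} (G : SimpleGraph V) (σ : Fin n ≃ V) : Prop :=
  ∀ i j k : Fin n, i < j → j < k → G.Adj (σ i) (σ k) →
    G.Adj (σ j) (σ i) ∨ G.Adj (σ j) (σ k)

/-- `G` contains `H` as an induced subgraph. -/
def ContainsInducedIso {V W : Type} (G : SimpleGraph V) (H : SimpleGraph W) : Prop :=
  ∃ f : W → V, Function.Injective f ∧ ∀ x y, H.Adj x y ↔ G.Adj (f x) (f y)

/-- A graph is chordal iff it has no induced cycle of length at least 4. -/
def Chordal {V : Type} (G : SimpleGraph V) : Prop :=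
  ∀ n, 4 ≤ n → ¬ ContainsInducedIso G (cycleG n)

/-- `G` contains `H` as an induced minor (via an induced minor model). -/
def HasInducedMinor {V W : Type} (G : SimpleGraph V) (H : SimpleGraph W) : Prop :=
  ∃ S : W → Set V,
    (∀ w, (G.induce (S w)).Connected) ∧
    (∀ w w', w ≠ w' → Disjoint (S w) (S w')) ∧
    (∀ w w', H.Adj w w' → ∃ a ∈ S w, ∃ b ∈ S w', G.Adj a b) ∧
    (∀ w w', w ≠ w' → ¬ H.Adj w w' → ∀ a ∈ S w, ∀ b ∈ S w', ¬ G.Adj a b)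

/-- `G` contains `K_t` as a minor (branch sets). -/
def HasCliqueMinor {V : Type} (G : SimpleGraph V) (t : ℕ) : Prop :=
  ∃ S : Fin t → Set V,
    (∀ i, (G.induce (S i)).Connected) ∧
    (∀ i j, i ≠ j → Disjoint (S i) (S j)) ∧
    (∀ i j, i ≠ j → ∃ a ∈ S i, ∃ b ∈ S j, G.Adj a b)

/-- There is an induced matching of `G` of size `m` between `A` and its complement:
the `2m` matched vertices induce exactly the `m` matching edges in `G`. -/
def IsSimMatching {V : Type} (G : SimpleGraph V) (A : Set V) (m : ℕ) : Prop :=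
  ∃ a b : Fin m → V,
    Function.Injective a ∧ Function.Injective b ∧
    (∀ i, a i ∈ A) ∧ (∀ i, b i ∉ A) ∧
    (∀ i j, G.Adj (a i) (b j) ↔ i = j) ∧
    (∀ i j, ¬ G.Adj (a i) (a j)) ∧
    (∀ i j, ¬ G.Adj (b i) (b j))

/-- There is an induced matching of size `m` in the bipartite graph `G[A, V \ A]`
of edges crossing the cut. -/
def IsMimMatching {V : Type} (G : SimpleGraph V) (A : Set V) (m : ℕ) : Prop :=
  ∃ a b : Fin m → V,
    Function.Injective a ∧ Function.Injective b ∧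
    (∀ i, a i ∈ A) ∧ (∀ i, b i ∉ A) ∧
    (∀ i j, G.Adj (a i) (b j) ↔ i = j)

def simval {V : Type} (G : SimpleGraph V) (A : Set V) : ℕ :=
  sSup {m | IsSimMatching G A m}

def mimval {V : Type} (G : SimpleGraph V) (A : Set V) : ℕ :=
  sSup {m | IsMimMatching G A m}

/-- GF(2)-rank of the `A × Aᶜ` submatrix of the adjacency matrix: the dimension of the
span of the rows of that submatrix (rows extended by zero on columns of `A`). -/
def cutrk {V : Type} [Fintype V] (G : SimpleGraph V) (A : Set V) : ℕ :=
  Module.finrank (ZMod 2) (Submodule.span (ZMod 2)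
    {r : V → ZMod 2 | ∃ a ∈ A, r = fun v => if v ∉ A ∧ G.Adj a v then 1 else 0})

/-- A branch-decomposition of a graph on vertex set `V`: a finite subcubic tree together
with an injection of `V` onto its leaves. -/
structure BranchDecomp (V : Type) [Fintype V] where
  β : Type
  finβ : Fintype β
  T : SimpleGraph β
  connected : T.Connected
  acyclic : T.IsAcyclic
  subcubic : ∀ x : β, (T.neighborSet x).ncard = 1 ∨ (T.neighborSet x).ncard = 3
  L : V → β
  inj : Function.Injective L
  leaves : ∀ x : β, (T.neighborSet x).ncard = 1 ↔ ∃ v, L v = x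

/-- The side of the cut induced by the tree edge `xy`, on the side of `x`. -/
def BranchDecomp.cut {V : Type} [Fintype V] (D : BranchDecomp V) (x y : D.β) : Set V :=
  {v | (D.T.deleteEdges {s(x, y)}).Reachable (D.L v) x}

/-- The `f`-width of a graph on vertex set `V`: minimum over branch-decompositions of the
maximum of `f` over the cuts of the decomposition. -/
def fWidth {V : Type} [Fintype V] (f : Set V → ℕ) : ℕ :=
  sInf {w | ∃ D : BranchDecomp V, ∀ x y, D.T.Adj x y → f (D.cut x y) ≤ w}

def simw {V : Type} [Fintype V] (G : SimpleGraph V) : ℕ := fWidth (simval G)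
def mimw {V : Type} [Fintype V] (G : SimpleGraph V) : ℕ := fWidth (mimval G)
def rankw {V : Type} [Fintype V] (G : SimpleGraph V) : ℕ := fWidth (cutrk G)

/-- Contraction of the edge `v₁v₂`: the vertex `v₂` is removed and `v₁` plays the role of
the contracted vertex `z`, adjacent to all former neighbors of `v₁` or `v₂`. -/
def contractE {V : Type} (G : SimpleGraph V) (v1 v2 : V) : SimpleGraph {v : V // v ≠ v2} :=
  SimpleGraph.fromRel (fun x y =>
    G.Adj x y ∨ ((x : V) = v1 ∧ G.Adj v2 y) ∨ ((y : V) = v1 ∧ G.Adj (x : V) v2))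

/-- The `(p × q)` column-clique grid. -/
def ccGrid (p q : ℕ) : SimpleGraph (Fin p × Fin q) :=
  SimpleGraph.fromRel (fun u v =>
    (u.2 = v.2) ∨ (u.1 = v.1 ∧ ((u.2 : ℕ) + 1 = v.2 ∨ (v.2 : ℕ) + 1 = u.2)))

/-- The `(p × q)` Hsu-clique chain graph. -/
def hsu (p q : ℕ) : SimpleGraph (Fin p × Fin q) :=
  SimpleGraph.fromRel (fun u v =>
    (u.2 = v.2) ∨ ((u.2 : ℕ) + 1 = v.2 ∧ u.1 ≤ v.1))

/-- The `(k × k)` grid graph. -/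
def gridG (k : ℕ) : SimpleGraph (Fin k × Fin k) :=
  SimpleGraph.fromRel (fun u v =>
    (u.1 = v.1 ∧ (u.2 : ℕ) + 1 = v.2) ∨ (u.2 = v.2 ∧ (u.1 : ℕ) + 1 = v.1))

/-- A tree-decomposition of `G`. -/
structure TreeDecomp (V : Type) (G : SimpleGraph V) where
  β : Type
  finβ : Fintype β
  T : SimpleGraph β
  connected : T.Connected
  acyclic : T.IsAcyclic
  B : β → Set V
  coverV : ∀ v : V, ∃ t, v ∈ B t
  coverE : ∀ u v, G.Adj u v → ∃ t, u ∈ B t ∧ v ∈ B t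
  coherent : ∀ v : V, (T.induce {t | v ∈ B t}).Connected

/-- Tree-width. -/
def tw {V : Type} (G : SimpleGraph V) : ℕ :=
  sInf {k | ∃ D : TreeDecomp V G, ∀ t, (D.B t).ncard ≤ k + 1}

/-- `G` is `d`-degenerate: every (induced) subgraph has a vertex of degree at most `d`. -/
def Degenerate {V : Type} (G : SimpleGraph V) (d : ℕ) : Prop :=
  ∀ S : Set V, S.Nonempty → ∃ v ∈ S, {u ∈ S | G.Adj v u}.ncard ≤ d

/-- Every graph on `N` vertices contains a clique of size `k` or an independent set of
size `l`. -/
def ramseyProp (N k l : ℕ) : Prop :=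
  ∀ G : SimpleGraph (Fin N),
    (∃ s : Finset (Fin N), G.IsNClique k s) ∨ (∃ s : Finset (Fin N), Gᶜ.IsNClique l s)

/-- The Ramsey number `R(k, l)`. -/
def ramsey (k l : ℕ) : ℕ := sInf {N | ramseyProp N k l}

/-- `G` is a circle graph: the intersection graph of chords of a circle, equivalently the
overlap graph of a family of intervals with pairwise distinct endpoints. -/
def IsCircleGraph {V : Type} (G : SimpleGraph V) : Prop :=
  ∃ a b : V → ℝ, (∀ v, a v < b v) ∧
    (∀ v w : V, v ≠ w → a v ≠ a w ∧ a v ≠ b w ∧ b v ≠ a w ∧ b v ≠ b w) ∧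
    (∀ v w, G.Adj v w ↔
      (a v < a w ∧ a w < b v ∧ b v < b w) ∨ (a w < a v ∧ a v < b w ∧ b w < b v))

/-- Vertex set of the split graph witnessing unbounded mim-width: a clique `Fin m`
together with one independent vertex for each nonempty subset of the clique. -/
abbrev splitV (m : ℕ) := Fin m ⊕ {S : Finset (Fin m) // S.Nonempty}

/-- The split graph with clique of size `m` and an independent set of size `2^m - 1`
whose vertices have pairwise distinct nonempty neighborhoods in the clique. -/
def splitG (m : ℕ) : SimpleGraph (splitV m) :=
  SimpleGraph.fromRel (fun x y =>
    match x, y with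
    | Sum.inl i, Sum.inl j => i ≠ j
    | Sum.inl i, Sum.inr S => i ∈ S.1
    | _, _ => False)

end

/-! An induced matching `aᵢbᵢ` across a cut `(A, Aᶜ)` of size `R(R(w+1, t), R(t, t))`
contains, by Ramsey's theorem applied to the `aᵢ`, either `R(w+1, t)` pairwise non-adjacent `aᵢ`
or `R(t, t)` pairwise adjacent ones. Ramsey's theorem applied to their partners `bᵢ` then yields
either `w+1` pairs with both sides independent, i.e. an induced matching of `G` of size `w+1`,
which sim-value at most `w` forbids, or `t` pairs inducing `K_t ⊠ K_t` or `K_t ⊠ S_t`. Hence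
every cut of sim-value at most `w` has mim-value below the bound, and a branch-decomposition
witnessing sim-width `w` witnesses the mim-width bound. -/

theorem SimpleGraph.not_cliqueFreeOn_succ_of_filter_adj {α : Type*} {H : SimpleGraph α}
    [DecidableRel H.Adj] {s : Finset α} {a : α} {n : ℕ} (ha : a ∈ s)
    (h : ¬ H.CliqueFreeOn (s.filter (H.Adj a)) n) :
    ¬ H.CliqueFreeOn s (n + 1) :=
  fun hs => h (CliqueFreeOn.subset _ (fun b hb => by simpa using hb) (hs.of_succ _ ha))

/-- `ramseyProp` for vertex subsets of arbitrary graphs, the form the neighbourhood induction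
needs. -/
def RamseyBound (N k l : ℕ) : Prop :=
  ∀ {α : Type} (H : SimpleGraph α) (s : Finset α), N ≤ s.card →
    ¬ H.CliqueFreeOn s k ∨ ¬ Hᶜ.CliqueFreeOn s l

namespace RamseyBound

theorem symm {N k l : ℕ} (h : RamseyBound N k l) : RamseyBound N l k := fun H s hs => by
  simpa only [compl_compl, or_comm] using h Hᶜ s hs

theorem zero_left (l : ℕ) : RamseyBound 0 0 l := fun H s _ =>
  Or.inl fun h => h (by simp) (isNClique_zero.2 rfl)

theorem succ {N₁ N₂ k l : ℕ} (h₁ : RamseyBound N₁ k (l + 1)) (h₂ : RamseyBound N₂ (k + 1) l) :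
    RamseyBound (N₁ + N₂ + 1) (k + 1) (l + 1) := by
  intro α H s hs
  obtain ⟨a, ha⟩ : s.Nonempty := Finset.card_pos.1 (by omega)
  have hsub {p : α → Prop} [DecidablePred p] {n : ℕ} {H' : SimpleGraph α} :
      ¬ H'.CliqueFreeOn (s.filter p) n → ¬ H'.CliqueFreeOn s n :=
    mt (CliqueFreeOn.subset _ (Finset.coe_subset.2 (Finset.filter_subset _ _)))
  have hcover : s ⊆ insert a (s.filter (H.Adj a) ∪ s.filter (Hᶜ.Adj a)) := by
    intro b hb
    by_cases hab : a = b <;> by_cases hadj : H.Adj a b <;> simp_all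
  have hcard : s.card ≤ (s.filter (H.Adj a)).card + (s.filter (Hᶜ.Adj a)).card + 1 :=
    (Finset.card_le_card hcover).trans
      ((Finset.card_insert_le _ _).trans (by gcongr; exact Finset.card_union_le _ _))
  obtain hc | hc : N₁ ≤ (s.filter (H.Adj a)).card ∨ N₂ ≤ (s.filter (Hᶜ.Adj a)).card := by omega
  · exact (h₁ H _ hc).imp (not_cliqueFreeOn_succ_of_filter_adj ha) hsub
  · have := (h₂.symm Hᶜ _ hc).symm
    rw [compl_compl] at this
    exact this.imp hsub (not_cliqueFreeOn_succ_of_filter_adj ha)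

theorem exists_bound (k l : ℕ) : ∃ N, RamseyBound N k l := by
  induction k generalizing l with
  | zero => exact ⟨0, zero_left l⟩
  | succ k ihk =>
    induction l with
    | zero => exact ⟨0, RamseyBound.symm (zero_left (k + 1))⟩
    | succ l ihl =>
      obtain ⟨N₁, h₁⟩ := ihk (l + 1)
      obtain ⟨N₂, h₂⟩ := ihl
      exact ⟨N₁ + N₂ + 1, h₁.succ h₂⟩

theorem ramseyProp {N k l : ℕ} (h : RamseyBound N k l) : ramseyProp N k l := fun G => by
  simpa only [CliqueFree, cliqueFreeOn_univ, Finset.coe_univ, not_forall, not_not] using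
    h G Finset.univ (by simp)

end RamseyBound

theorem ramseyProp_ramsey (k l : ℕ) : ramseyProp (ramsey k l) k l := by
  obtain ⟨N, hN⟩ := RamseyBound.exists_bound k l
  exact Nat.sInf_mem (s := {N | ramseyProp N k l}) ⟨N, hN.ramseyProp⟩

theorem ramseyProp.exists_indep_or_clique {N k l m : ℕ} (hR : ramseyProp N k l) (hm : N ≤ m)
    {V : Type} (G : SimpleGraph V) (x : Fin m → V) :
    (∃ f : Fin k ↪ Fin m, ∀ i j, ¬ G.Adj (x (f i)) (x (f j))) ∨
      ∃ f : Fin l ↪ Fin m, ∀ i j, G.Adj (x (f i)) (x (f j)) ↔ i ≠ j := by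
  let e := Fin.castLEEmb hm
  rcases hR (G.comap (x ∘ e))ᶜ with ⟨s, hs⟩ | ⟨s, hs⟩
  · let f := topEmbeddingOfNotCliqueFree hs.not_cliqueFree
    refine Or.inl ⟨f.toEmbedding.trans e, fun i j hij => ?_⟩
    obtain rfl | hne := eq_or_ne i j
    · exact G.irrefl hij
    · exact ((f.map_adj_iff.2 hne).2 hij)
  · rw [compl_compl] at hs
    let f := topEmbeddingOfNotCliqueFree hs.not_cliqueFree
    exact Or.inr ⟨f.toEmbedding.trans e, fun i j => f.map_adj_iff⟩

structure IsCrossMatching {V ι : Type} (G : SimpleGraph V) (A : Set V) (a b : ι → V) : Prop where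
  left_mem : ∀ i, a i ∈ A
  right_notMem : ∀ i, b i ∉ A
  adj_iff : ∀ i j, G.Adj (a i) (b j) ↔ i = j

namespace IsCrossMatching

variable {V ι : Type} {G : SimpleGraph V} {A : Set V} {a b : ι → V}

theorem left_ne_right (h : IsCrossMatching G A a b) (i j : ι) : a i ≠ b j :=
  fun hij => h.right_notMem j (hij ▸ h.left_mem i)

theorem injective_left (h : IsCrossMatching G A a b) : Function.Injective a :=
  fun i j hij => ((h.adj_iff j i).1 (hij ▸ (h.adj_iff i i).2 rfl)).symm

theorem injective_right (h : IsCrossMatching G A a b) : Function.Injective b :=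
  fun i j hij => (h.adj_iff i j).1 (hij ▸ (h.adj_iff i i).2 rfl)

theorem symm (h : IsCrossMatching G A a b) : IsCrossMatching G Aᶜ b a where
  left_mem := h.right_notMem
  right_notMem i := not_not.2 (h.left_mem i)
  adj_iff i j := G.adj_comm _ _ |>.trans (h.adj_iff j i) |>.trans eq_comm

theorem comp {κ : Type} (h : IsCrossMatching G A a b) {f : κ → ι} (hf : Function.Injective f) :
    IsCrossMatching G A (a ∘ f) (b ∘ f) where
  left_mem i := h.left_mem (f i)
  right_notMem i := h.right_notMem (f i)
  adj_iff i j := (h.adj_iff (f i) (f j)).trans hf.eq_iff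

theorem isSimMatching {m : ℕ} {a b : Fin m → V} (h : IsCrossMatching G A a b)
    (ha : ∀ i j, ¬ G.Adj (a i) (a j)) (hb : ∀ i j, ¬ G.Adj (b i) (b j)) :
    IsSimMatching G A m :=
  ⟨a, b, h.injective_left, h.injective_right, h.left_mem, h.right_notMem, h.adj_iff, ha, hb⟩

theorem containsInducedIso_ktkt {t : ℕ} {a b : Fin t → V} (h : IsCrossMatching G A a b)
    (ha : ∀ i j, G.Adj (a i) (a j) ↔ i ≠ j) (hb : ∀ i j, G.Adj (b i) (b j) ↔ i ≠ j) :
    ContainsInducedIso G (ktkt t) := by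
  refine ⟨Sum.elim a b, h.injective_left.sumElim h.injective_right h.left_ne_right, ?_⟩
  rintro (i | i) (j | j) <;> simp [ktkt, ha, hb, h.adj_iff, G.adj_comm (b _), eq_comm]

theorem containsInducedIso_ktst {t : ℕ} {a b : Fin t → V} (h : IsCrossMatching G A a b)
    (ha : ∀ i j, G.Adj (a i) (a j) ↔ i ≠ j) (hb : ∀ i j, ¬ G.Adj (b i) (b j)) :
    ContainsInducedIso G (ktst t) := by
  refine ⟨Sum.elim a b, h.injective_left.sumElim h.injective_right h.left_ne_right, ?_⟩
  rintro (i | i) (j | j) <;> simp [ktst, ha, hb, h.adj_iff, G.adj_comm (b _), eq_comm]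

end IsCrossMatching

theorem IsCrossMatching.isSimMatching_or_ktkt_or_ktst {V : Type} {G : SimpleGraph V}
    {A : Set V} {k t m : ℕ} {a b : Fin m → V} (h : IsCrossMatching G A a b)
    (hm : ramsey (ramsey k t) (ramsey t t) ≤ m) :
    IsSimMatching G A k ∨ ContainsInducedIso G (ktkt t) ∨ ContainsInducedIso G (ktst t) := by
  rcases (ramseyProp_ramsey _ _).exists_indep_or_clique hm G a with ⟨f, hfa⟩ | ⟨f, hfa⟩
  · rcases (ramseyProp_ramsey k t).exists_indep_or_clique le_rfl G (b ∘ f) with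
      ⟨g, hgb⟩ | ⟨g, hgb⟩
    · exact Or.inl ((h.comp (f.injective.comp g.injective)).isSimMatching
        (fun i j => hfa (g i) (g j)) hgb)
    · exact Or.inr (Or.inr <| (h.comp (f.injective.comp g.injective)).symm
        |>.containsInducedIso_ktst hgb (fun i j => hfa (g i) (g j)))
  · rcases (ramseyProp_ramsey t t).exists_indep_or_clique le_rfl G (b ∘ f) with
      ⟨g, hgb⟩ | ⟨g, hgb⟩
    · exact Or.inr (Or.inr ((h.comp (f.injective.comp g.injective)).containsInducedIso_ktst
        (fun i j => (hfa (g i) (g j)).trans g.injective.ne_iff) hgb))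
    · exact Or.inr (Or.inl ((h.comp (f.injective.comp g.injective)).containsInducedIso_ktkt
        (fun i j => (hfa (g i) (g j)).trans g.injective.ne_iff) hgb))

theorem le_simval_of_isSimMatching {V : Type} [Fintype V] {G : SimpleGraph V} {A : Set V}
    {m : ℕ} (h : IsSimMatching G A m) : m ≤ simval G A := by
  refine le_csSup ⟨Fintype.card V, ?_⟩ h
  rintro n ⟨a, -, ha, -⟩
  simpa using Fintype.card_le_of_injective a ha

theorem mimval_le_of_simval_le {V : Type} [Fintype V] {G : SimpleGraph V} {w t : ℕ}
    (h1 : ¬ ContainsInducedIso G (ktkt t)) (h2 : ¬ ContainsInducedIso G (ktst t))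
    {A : Set V} (hA : simval G A ≤ w) :
    mimval G A ≤ ramsey (ramsey (w + 1) t) (ramsey t t) := by
  refine csSup_le ⟨0, ?_⟩ ?_
  · exact ⟨Fin.elim0, Fin.elim0, fun i => i.elim0, fun i => i.elim0, fun i => i.elim0,
      fun i => i.elim0, fun i => i.elim0⟩
  rintro m ⟨a, b, -, -, haA, hbA, hab⟩
  by_contra! hm
  obtain hsim | hkk | hks :=
    IsCrossMatching.isSimMatching_or_ktkt_or_ktst ⟨haA, hbA, hab⟩ hm.le
  · exact absurd (le_simval_of_isSimMatching hsim) (by omega)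
  · exact h1 hkk
  · exact h2 hks

theorem BranchDecomp.exists_forall_le {V : Type} [Fintype V] (D : BranchDecomp V)
    (f : Set V → ℕ) : ∃ w, ∀ x y, f (D.cut x y) ≤ w := by
  have := D.finβ
  obtain ⟨w, hw⟩ := (Set.finite_range fun p : D.β × D.β => f (D.cut p.1 p.2)).bddAbove
  exact ⟨w, fun x y => hw ⟨(x, y), rfl⟩⟩

theorem fWidth_le_of_le_imp_le {V : Type} [Fintype V] {f g : Set V → ℕ} {w c : ℕ}
    (hfg : ∀ A, f A ≤ w → g A ≤ c) (hf : fWidth f ≤ w) : fWidth g ≤ c := by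
  rcases Set.eq_empty_or_nonempty
      {c' | ∃ D : BranchDecomp V, ∀ x y, D.T.Adj x y → g (D.cut x y) ≤ c'} with hg | ⟨-, D₀, -⟩
  · simp only [fWidth, hg, Nat.sInf_empty, zero_le]
  obtain ⟨w₀, hw₀⟩ := D₀.exists_forall_le f
  obtain ⟨D, hD⟩ : ∃ D : BranchDecomp V, ∀ x y, D.T.Adj x y → f (D.cut x y) ≤ fWidth f :=
    Nat.sInf_mem (s := {w' | ∃ D : BranchDecomp V, ∀ x y, D.T.Adj x y → f (D.cut x y) ≤ w'})
      ⟨w₀, D₀, fun x y _ => hw₀ x y⟩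
  exact Nat.sInf_le ⟨D, fun x y hxy => hfg _ ((hD x y hxy).trans hf)⟩

/-- every graph of sim-width at most `w` with no induced subgraph
isomorphic to `K_t ⊠ K_t` or `K_t ⊠ S_t` has mim-width at most
`R(R(w+1, t), R(t, t))`, where `R` is the Ramsey number. -/
theorem stmt14 {V : Type} [Fintype V] (G : SimpleGraph V) (w t : ℕ)
    (hsim : simw G ≤ w)
    (h1 : ¬ ContainsInducedIso G (ktkt t)) (h2 : ¬ ContainsInducedIso G (ktst t)) :
    mimw G ≤ ramsey (ramsey (w + 1) t) (ramsey t t) :=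
  fWidth_le_of_le_imp_le (fun _ hA => mimval_le_of_simval_le h1 h2 hA) hsim
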